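/- The projective Reed-Solomon code PRS(q+1,k) has minimum distance q + 2 - k; in particular it is an MDS code of length q+1 and dimension k. -/

import Mathlib

/-!
A nonzero `g` with `deg g < k` has at most `deg g` roots, so its evaluations have weight at least
`q - deg g`; the coordinate at infinity is nonzero exactly when `deg g = k - 1`. Either way the
codeword has weight at least `q + 2 - k`, and `∏_{a ∈ s} (X - a)` with `|s| = k - 1` attains it.
Since `k ≤ q`, a polynomial of degree `< k` is determined by its values on `F`, so the encoding is
injective and the code has `q ^ k` words.
-/

open Polynomial

/-- Error distance of a word `u` to a code `C`: minimum Hamming distance to a codeword. -/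
noncomputable def errDist {ι F : Type*} [Fintype ι] [DecidableEq F]
    (C : Set (ι → F)) (u : ι → F) : ℕ :=
  sInf (hammingDist u '' C)

/-- Covering radius of a code: maximum error distance over all words. -/
noncomputable def covRad {ι F : Type*} [Fintype ι] [DecidableEq F]
    (C : Set (ι → F)) : ℕ :=
  sSup (Set.range (errDist C))

/-- Minimum distance of a code: minimum Hamming weight of a nonzero codeword. -/
noncomputable def minDist {ι F : Type*} [Fintype ι] [DecidableEq F] [Zero F]
    (C : Set (ι → F)) : ℕ :=
  sInf (hammingNorm '' (C \ {0}))

/-- Reed-Solomon code: evaluations of polynomials of degree `< k` at the points `x i`. -/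
def RSCode (F : Type*) [Field F] {ι : Type*} (x : ι → F) (k : ℕ) : Set (ι → F) :=
  {u | ∃ f : F[X], f.degree < (k : WithBot ℕ) ∧ ∀ i, u i = f.eval (x i)}

/-- Projective Reed-Solomon code of length `q+1` (words indexed by `Option F`,
with `none` the point at infinity carrying the coefficient of `X^(k-1)`). -/
def PRSCode (F : Type*) [Field F] (k : ℕ) : Set (Option F → F) :=
  {w | ∃ g : F[X], g.degree < (k : WithBot ℕ) ∧
    (∀ a : F, w (some a) = g.eval a) ∧ w none = g.coeff (k - 1)}

open Finset

theorem minDist_eq_of_forall_le_of_exists {ι F : Type*} [Fintype ι] [DecidableEq F] [Zero F]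
    {C : Set (ι → F)} {d : ℕ} (hle : ∀ w ∈ C, w ≠ 0 → d ≤ hammingNorm w)
    (hex : ∃ w ∈ C, w ≠ 0 ∧ hammingNorm w = d) : minDist C = d := by
  obtain ⟨w, hw, hw0, rfl⟩ := hex
  refine IsLeast.csInf_eq ⟨⟨w, ⟨hw, hw0⟩, rfl⟩, ?_⟩
  rintro _ ⟨v, ⟨hv, hv0⟩, rfl⟩
  exact hle v hv hv0

theorem hammingNorm_option {ι β : Type*} [Fintype ι] [Zero β] [DecidableEq β]
    (w : Option ι → β) :
    hammingNorm w = hammingNorm (w ∘ some) + if w none = 0 then 0 else 1 := by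
  simp only [hammingNorm, card_filter, Fintype.sum_option, Function.comp_apply, ite_not]
  ring

section Polynomial
variable {R : Type*} [CommRing R] [IsDomain R] [Fintype R] [DecidableEq R]

theorem Polynomial.card_sub_natDegree_le_hammingNorm_eval {p : R[X]} (hp : p ≠ 0) :
    Fintype.card R - p.natDegree ≤ hammingNorm p.eval := by
  have hzeros : #{a | p.eval a = 0} ≤ p.natDegree := by
    refine card_le_degree_of_subset_roots fun a ha => ?_
    simpa [mem_roots hp] using ha
  have hsplit := card_filter_add_card_filter_not (s := univ) (fun a => p.eval a = 0)
  rw [card_univ] at hsplit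
  rw [hammingNorm]
  simp only [ne_eq] at hsplit ⊢
  omega

theorem Polynomial.hammingNorm_eval_prod_X_sub_C (s : Finset R) :
    hammingNorm (∏ b ∈ s, (X - C b)).eval = Fintype.card R - #s := by
  have hzeros : ({a | (∏ b ∈ s, (X - C b)).eval a ≠ 0} : Finset R) = sᶜ := by
    ext a
    simp [eval_prod, prod_eq_zero_iff, sub_eq_zero]
  rw [hammingNorm, hzeros, card_compl]

end Polynomial

section PRS
variable {F : Type*} [Field F] {k : ℕ}

def prsEncode (k : ℕ) (g : F[X]) : Option F → F :=
  fun o => o.elim (g.coeff (k - 1)) g.eval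

theorem PRSCode_eq_image (F : Type*) [Field F] (k : ℕ) :
    PRSCode F k = prsEncode k '' {g : F[X] | g.degree < k} := by
  ext w
  constructor
  · rintro ⟨g, hg, hsome, hnone⟩
    refine ⟨g, hg, funext fun o => ?_⟩
    cases o with
    | none => exact hnone.symm
    | some a => exact (hsome a).symm
  · rintro ⟨g, hg, rfl⟩
    exact ⟨g, hg, fun _ => rfl, rfl⟩

theorem prsEncode_zero (k : ℕ) : prsEncode k (0 : F[X]) = 0 := by
  funext o
  cases o <;> simp [prsEncode]

variable [Fintype F]

theorem prsEncode_injOn (hk : k ≤ Fintype.card F) :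
    Set.InjOn (prsEncode k) {g : F[X] | g.degree < k} := by
  have hlt {g : F[X]} (hg : g.degree < k) : g.degree < #(univ : Finset F) :=
    hg.trans_le (by rw [card_univ]; exact_mod_cast hk)
  intro g₁ hg₁ g₂ hg₂ h
  exact eq_of_degrees_lt_of_eval_finset_eq univ (hlt hg₁) (hlt hg₂)
    fun a _ => congrFun h (some a)

theorem ncard_PRSCode (hk : k ≤ Fintype.card F) :
    (PRSCode F k).ncard = Fintype.card F ^ k := by
  have hset : {g : F[X] | g.degree < k} = degreeLT F k := by
    ext g
    exact mem_degreeLT.symm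
  rw [PRSCode_eq_image, (prsEncode_injOn hk).ncard_image, hset, ← Nat.card_coe_set_eq,
    SetLike.coe_sort_coe, Nat.card_congr (degreeLTEquiv F k).toEquiv, Nat.card_eq_fintype_card,
    Fintype.card_fun, Fintype.card_fin]

variable [DecidableEq F]

theorem hammingNorm_prsEncode (k : ℕ) (g : F[X]) :
    hammingNorm (prsEncode k g) =
      hammingNorm g.eval + if g.coeff (k - 1) = 0 then 0 else 1 :=
  hammingNorm_option _

theorem le_hammingNorm_prsEncode {g : F[X]} (hg0 : g ≠ 0) (hg : g.degree < k) :
    Fintype.card F + 2 - k ≤ hammingNorm (prsEncode k g) := by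
  have hdeg : g.natDegree < k := (natDegree_lt_iff_degree_lt hg0).mpr hg
  have hzeros := card_sub_natDegree_le_hammingNorm_eval hg0
  rw [hammingNorm_prsEncode]
  split_ifs with hc
  · have : g.natDegree ≠ k - 1 := fun h =>
      hg0 (leadingCoeff_eq_zero.mp (by rwa [leadingCoeff, h]))
    omega
  · omega

theorem le_hammingNorm_of_mem_PRSCode {w : Option F → F} (hw : w ∈ PRSCode F k)
    (hw0 : w ≠ 0) :
    Fintype.card F + 2 - k ≤ hammingNorm w := by
  rw [PRSCode_eq_image] at hw
  obtain ⟨g, hg, rfl⟩ := hw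
  have hg0 : g ≠ 0 := by
    rintro rfl
    exact hw0 (prsEncode_zero k)
  exact le_hammingNorm_prsEncode hg0 hg

theorem exists_mem_PRSCode_hammingNorm_eq (hk1 : 1 ≤ k) (hk : k ≤ Fintype.card F + 1) :
    ∃ w ∈ PRSCode F k, w ≠ 0 ∧ hammingNorm w = Fintype.card F + 2 - k := by
  obtain ⟨s, -, hs⟩ := exists_subset_card_eq (s := (univ : Finset F)) (n := k - 1)
    (by rw [card_univ]; omega)
  set g : F[X] := ∏ a ∈ s, (X - C a)
  have hmonic : g.Monic := monic_prod_of_monic _ _ fun a _ => monic_X_sub_C a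
  have hdeg : g.natDegree = k - 1 := by
    rw [natDegree_prod_of_monic _ _ fun a _ => monic_X_sub_C a]
    simp [hs]
  have hlead : g.coeff (k - 1) = 1 := hdeg ▸ hmonic.coeff_natDegree
  refine ⟨prsEncode k g, (PRSCode_eq_image F k).symm ▸ ⟨g, ?_, rfl⟩, ?_, ?_⟩
  · show g.degree < k
    rw [degree_eq_natDegree hmonic.ne_zero, hdeg]
    exact_mod_cast Nat.sub_lt hk1 one_pos
  · intro h
    simpa [prsEncode, hlead] using congrFun h none
  · rw [hammingNorm_prsEncode, hlead, hammingNorm_eval_prod_X_sub_C, hs]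
    simp only [one_ne_zero, if_false]
    omega

end PRS

/-- `PRS(q+1,k)` has minimum distance `q + 2 - k`; it is an MDS code of length `q+1`
and dimension `k` (so it has `q^k` codewords). -/
theorem prs_mds {F : Type*} [Field F] [Fintype F] [DecidableEq F] {k : ℕ}
    (hk1 : 1 ≤ k) (hk : k ≤ Fintype.card F) :
    minDist (PRSCode F k) = Fintype.card F + 2 - k ∧
      (PRSCode F k).ncard = Fintype.card F ^ k :=
  ⟨minDist_eq_of_forall_le_of_exists (fun _ => le_hammingNorm_of_mem_PRSCode)
      (exists_mem_PRSCode_hammingNorm_eq hk1 (by omega)),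
    ncard_PRSCode hk⟩
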